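/- arXiv:1310.7844 — 7 statements merged into one kernel-verified Lean document; each statement's English description precedes it below -/
import Mathlib

section
/- Let N ≥ 1 and let η ∈ ℂ be a primitive 2N-th root of unity. A continuous function f : ℂ → ℂ satisfies the Haruki functional equation ∑_{k=0}^{N-1} f(x + η^{2k}y) = ∑_{k=0}^{N-1} f(x + η^{2k+1}y) for all x,y ∈ ℂ if and only if there exist complex coefficients a_{i,j} (0 ≤ i,j ≤ N-1) such that f(z) = ∑_{i=0}^{N-1} ∑_{j=0}^{N-1} a_{i,j} z^i·conj(z)^j for all z ∈ ℂ. -/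
/-!
Write the equation as `∑_{m < 2N} (-1)^m f (x + η^m y) = 0`. Substituting `(x - η^n t, y + t)`
and subtracting removes the `n`-th term and replaces every other `f` by a forward difference;
removing the terms `m = 1, …, 2N - 1` in turn leaves `Δ_u^{2N-1} f = 0` for every step `u`.
A continuous function with this property agrees with its Newton polynomial on the rationals,
hence everywhere, first on lines and then in the plane; so `f` is a polynomial in `Re z, Im z`,
that is `f z = ∑ e_{pq} z^p conj(z)^q`.

The monomials `z^p conj(z)^q` are linearly independent (the set `{(z, conj z)}` is Zariski
dense in `ℂ²`). Taking `x = c z, y = z` then shows that `e_{pq} ≠ 0` forces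
`∑_m (-1)^m (c + η^m)^p conj(c + η^m)^q` to vanish identically in `c`. Its coefficient of
`c^A conj(c)^B` is `binom(p, A) binom(q, B) S(p - A, q - B)`, where
`S(a, b) = ∑_m (-1)^m η^{m(a - b)}` is `2N` or `0` according as `2N ∣ N + a - b` or not.
Since `S(N, 0) = S(0, N) = 2N`, this forces `p, q < N`; conversely, for `p, q < N` every
`S(p - A, q - B)` vanishes, so these monomials solve the equation.
-/

open Finset Polynomial fwdDiff ComplexConjugate Function

section FwdDiff

variable {G H E : Type*} [AddCommMonoid G] [AddCommMonoid H] [AddCommGroup E]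

lemma fwdDiff_iter_comp {φ : G → H} {h : G} {k : H} (hφ : ∀ x, φ (x + h) = φ x + k)
    (f : H → E) (n : ℕ) : Δ_[h] ^[n] (f ∘ φ) = Δ_[k] ^[n] f ∘ φ := by
  induction n with
  | zero => rfl
  | succ n ih => ext x; simp only [iterate_succ_apply', ih, fwdDiff, comp_apply, hφ]

lemma fwdDiff_commute (a b : G) : Function.Commute (fwdDiff (G := E) a) (fwdDiff b) := by
  intro f; ext x; simp only [fwdDiff, add_right_comm]; abel

lemma fwdDiff_iter_zero (h : G) (n : ℕ) : Δ_[h] ^[n] (0 : G → E) = 0 :=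
  iterate_fixed (fwdDiff_const h 0) n

lemma fwdDiff_iter_eq_zero_of_le {h : G} {f : G → E} {M j : ℕ} (hf : Δ_[h] ^[M] f = 0)
    (hj : M ≤ j) : Δ_[h] ^[j] f = 0 := by
  obtain ⟨i, rfl⟩ := Nat.exists_eq_add_of_le hj
  rw [add_comm, iterate_add_apply, hf, fwdDiff_iter_zero]

lemma shift_eq_sum_range_fwdDiff_iter {h : G} {f : G → E} {M : ℕ} (hf : Δ_[h] ^[M] f = 0)
    (x : G) (n : ℕ) : f (x + n • h) = ∑ j ∈ range M, n.choose j • Δ_[h] ^[j] f x := by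
  have hchoose : ∀ j ∈ range (max (n + 1) M), j ∉ range (n + 1) →
      n.choose j • Δ_[h] ^[j] f x = 0 := fun j _ hj => by
    rw [Nat.choose_eq_zero_of_lt (by simpa using hj), zero_smul]
  have hdiff : ∀ j ∈ range (max (n + 1) M), j ∉ range M → n.choose j • Δ_[h] ^[j] f x = 0 :=
    fun j _ hj => by
      rw [fwdDiff_iter_eq_zero_of_le hf (by simpa using hj), Pi.zero_apply, smul_zero]
  rw [shift_eq_sum_fwdDiff_iter h f n x, sum_subset (range_mono (le_max_left _ M)) hchoose,
    sum_subset (range_mono (le_max_right (n + 1) M)) hdiff]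

lemma Continuous.fwdDiff_iter [TopologicalSpace G] [ContinuousAdd G] [TopologicalSpace E]
    [IsTopologicalAddGroup E] {f : G → E} (hf : Continuous f) (h : G) (n : ℕ) :
    Continuous (Δ_[h] ^[n] f) := by
  induction n with
  | zero => exact hf
  | succ n ih => rw [iterate_succ_apply']; exact (ih.comp (continuous_add_const h)).sub ih

theorem fwdDiff_iter_eq_zero_of_forall_sum_eq_zero {ι K : Type*} [DecidableEq ι] [Field K]
    {w : ι → K} {i : ι} {s : Finset ι} (hi : i ∉ s) (hw : Set.InjOn w (insert i s))
    {g : ι → K → E} (hg : ∀ x y, ∑ m ∈ insert i s, g m (x + w m * y) = 0) (u : K) :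
    Δ_[u] ^[#s] (g i) = 0 := by
  induction s using Finset.induction_on generalizing g with
  | empty => ext x; simpa using hg x 0
  | insert n s hn ih =>
    have hin : w i - w n ≠ 0 := sub_ne_zero.mpr fun h => hi (by
      rw [hw (by simp) (by simp) h]; exact mem_insert_self n s)
    have hni : n ∉ insert i s := by
      simp only [mem_insert, not_or] at hi ⊢; exact ⟨Ne.symm hi.1, hn⟩
    set t := (w i - w n)⁻¹ * u
    have hstep : (w i - w n) * t = u := by simp only [t]; field_simp
    rw [card_insert_of_notMem hn, iterate_succ_apply, ← hstep]
    have key := ih (g := fun m => Δ_[(w m - w n) * t] (g m)) (by simp_all) (hw.mono (by grind))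
      fun x y => ?_
    · rwa [hstep] at key ⊢
    -- the substitution `(x - w n * t, y + t)` moves the `m`-th argument by `(w m - w n) * t`
    have hsum : ∑ m ∈ insert n (insert i s),
        (g m (x - w n * t + w m * (y + t)) - g m (x + w m * y)) = 0 := by
      rw [sum_sub_distrib, insert_comm, hg, hg, sub_zero]
    rw [sum_insert hni, show x - w n * t + w n * (y + t) = x + w n * y by ring, sub_self,
      zero_add] at hsum
    rw [← hsum]
    refine sum_congr rfl fun m _ => ?_
    simp only [fwdDiff]
    congr 2; ring

end FwdDiff

section Newton

/-- Since `(descPochhammer ℂ j).eval n = j! * n.choose j`, this is the Gregory–Newton series of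
`g` at `x` with step `k`, truncated at order `M`. -/
noncomputable def newtonPolynomial (g : ℝ → ℂ) (k x : ℝ) (M : ℕ) : ℂ[X] :=
  ∑ j ∈ range M, C (Δ_[k] ^[j] g x / j.factorial) * descPochhammer ℂ j

lemma eval_newtonPolynomial (g : ℝ → ℂ) (k x : ℝ) (M : ℕ) (z : ℂ) :
    (newtonPolynomial g k x M).eval z =
      ∑ j ∈ range M, Δ_[k] ^[j] g x / (j.factorial : ℂ) * (descPochhammer ℂ j).eval z := by
  simp [newtonPolynomial, eval_finsetSum]

variable {M : ℕ} {g : ℝ → ℂ}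

lemma eval_newtonPolynomial_natCast {k : ℝ} (hg : Δ_[k] ^[M] g = 0) (x : ℝ) (n : ℕ) :
    (newtonPolynomial g k x M).eval (n : ℂ) = g (x + n * k) := by
  rw [← nsmul_eq_mul, shift_eq_sum_range_fwdDiff_iter hg, eval_newtonPolynomial]
  refine sum_congr rfl fun j _ => ?_
  rw [descPochhammer_eval_eq_descFactorial, Nat.descFactorial_eq_factorial_mul_choose,
    nsmul_eq_mul]
  have : (j.factorial : ℂ) ≠ 0 := Nat.cast_ne_zero.mpr j.factorial_ne_zero
  push_cast
  field_simp

lemma eval_newtonPolynomial_div_sub (hΔ : ∀ k, Δ_[k] ^[M] g = 0) {b : ℕ} (hb : 0 < b)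
    (m n : ℕ) : g (n / b - m) = (newtonPolynomial g 1 0 M).eval ((n / b - m : ℝ) : ℂ) := by
  have hb' : (b : ℂ) ≠ 0 := Nat.cast_ne_zero.mpr hb.ne'
  set P := newtonPolynomial g 1 0 M
  set Q := newtonPolynomial g (1 / b) (-m) M
  have hP (j : ℕ) : P.eval (j : ℂ) = g j := by rw [eval_newtonPolynomial_natCast (hΔ 1)]; simp
  have hQ (j : ℕ) : Q.eval (j : ℂ) = g (j / b - m) := by
    rw [eval_newtonPolynomial_natCast (hΔ _)]; congr 1; ring
  -- `Q` interpolates `g` along `j / b - m`; rescaled, it agrees with `P` on all of `ℕ`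
  have hQP : Q.comp (C (b : ℂ) * (X + C (m : ℂ))) = P := by
    refine eq_of_infinite_eval_eq _ _
      ((Set.infinite_range_of_injective Nat.cast_injective).mono ?_)
    rintro _ ⟨j, rfl⟩
    have : ((b * (j + m) : ℕ) / b - m : ℝ) = j := by push_cast; field_simp; ring
    simp only [Set.mem_ofPred_eq, eval_comp, eval_mul, eval_C, eval_add, eval_X, hP]
    rw [← this, ← hQ]
    push_cast
    rfl
  rw [← hQ, ← hQP, eval_comp]
  simp only [eval_mul, eval_C, eval_add, eval_X]
  congr 1
  push_cast
  field_simp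
  ring

lemma Rat.exists_cast_eq_div_sub (q : ℚ) : ∃ b m n : ℕ, 0 < b ∧ (q : ℝ) = n / b - m := by
  obtain ⟨n, hn⟩ := Int.eq_ofNat_of_zero_le (a := q.num + q.num.natAbs * q.den) (by
    rw [Int.natCast_natAbs]
    nlinarith [neg_abs_le q.num, abs_nonneg q.num, (by exact_mod_cast q.pos : (0 : ℤ) < q.den)])
  refine ⟨q.den, q.num.natAbs, n, q.pos, ?_⟩
  have hn' : (n : ℝ) = q.num + q.num.natAbs * q.den := by
    have := congrArg (Int.cast : ℤ → ℝ) hn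
    push_cast at this
    rw [Nat.cast_natAbs, Int.cast_abs, this]
  rw [hn', Rat.cast_def]
  field_simp
  ring

theorem eq_eval_newtonPolynomial (hg : Continuous g) (hΔ : ∀ k, Δ_[k] ^[M] g = 0) (t : ℝ) :
    g t = (newtonPolynomial g 1 0 M).eval (t : ℂ) := by
  refine congr_fun (Continuous.ext_on Rat.denseRange_cast hg
    ((newtonPolynomial g 1 0 M).continuous.comp Complex.continuous_ofReal) ?_) t
  rintro _ ⟨q, rfl⟩
  obtain ⟨b, m, n, hb, hq⟩ := Rat.exists_cast_eq_div_sub q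
  simpa only [comp_apply, hq] using eval_newtonPolynomial_div_sub hΔ hb m n

variable {f : ℂ → ℂ}

lemma apply_add_mul_eq_sum_fwdDiff_iter (hf : Continuous f) (hΔ : ∀ u, Δ_[u] ^[M] f = 0)
    (a v : ℂ) (t : ℝ) :
    f (a + t * v) =
      ∑ j ∈ range M, Δ_[v] ^[j] f a / j.factorial * (descPochhammer ℂ j).eval (t : ℂ) := by
  have hline (h : ℝ) (x : ℝ) : a + ((x + h : ℝ) : ℂ) * v = (a + x * v) + h * v := by
    push_cast; ring
  have hcomp (h : ℝ) (n : ℕ) := fwdDiff_iter_comp (φ := fun x : ℝ => a + x * v) (hline h) f n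
  have := eq_eval_newtonPolynomial (g := f ∘ fun x : ℝ => a + x * v) (by fun_prop)
    (fun h => by rw [hcomp, hΔ]; rfl) t
  simpa [eval_newtonPolynomial, hcomp] using this

theorem eq_sum_descPochhammer_re_im (hf : Continuous f) (hΔ : ∀ u, Δ_[u] ^[M] f = 0) (z : ℂ) :
    f z = ∑ j ∈ range M, ∑ l ∈ range M,
      Δ_[Complex.I] ^[l] (Δ_[1] ^[j] f) 0 / (j.factorial * l.factorial) *
        (descPochhammer ℂ j).eval (z.re : ℂ) * (descPochhammer ℂ l).eval (z.im : ℂ) := by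
  have hcol (j : ℕ) : Δ_[1] ^[j] f (z.im * Complex.I) = ∑ l ∈ range M,
      Δ_[Complex.I] ^[l] (Δ_[1] ^[j] f) 0 / l.factorial *
        (descPochhammer ℂ l).eval (z.im : ℂ) := by
    simpa using apply_add_mul_eq_sum_fwdDiff_iter (hf.fwdDiff_iter 1 j) (fun u => by
      rw [((fwdDiff_commute u 1).iterate_iterate M j).eq, hΔ, fwdDiff_iter_zero]) 0 Complex.I z.im
  conv_lhs => rw [← Complex.re_add_im z, add_comm, ← mul_one (z.re : ℂ)]
  rw [apply_add_mul_eq_sum_fwdDiff_iter hf hΔ]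
  refine sum_congr rfl fun j _ => ?_
  rw [hcol, sum_div, sum_mul]
  refine sum_congr rfl fun l _ => ?_
  field_simp

end Newton

section ConjMonomial

def conjMonomial (p q : ℕ) (z : ℂ) : ℂ := z ^ p * conj z ^ q

def conjPolynomials : Submodule ℂ (ℂ → ℂ) := Submodule.span ℂ (Set.range (uncurry conjMonomial))

def conjPolynomialsDegreeLT (N : ℕ) : Submodule ℂ (ℂ → ℂ) :=
  Submodule.span ℂ (Set.range fun ij : Fin N × Fin N => conjMonomial ij.1 ij.2)

lemma conjMonomial_mul (p q : ℕ) (z w : ℂ) :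
    conjMonomial p q (z * w) = conjMonomial p q z * conjMonomial p q w := by
  simp only [conjMonomial, map_mul, mul_pow]; ring

lemma conjMonomial_add (p q : ℕ) (x y : ℂ) :
    conjMonomial p q (x + y) = ∑ A ∈ range (p + 1), ∑ B ∈ range (q + 1),
      (p.choose A * q.choose B : ℂ) * conjMonomial A B x * conjMonomial (p - A) (q - B) y := by
  simp only [conjMonomial, map_add, add_pow]
  rw [sum_mul_sum]
  refine sum_congr rfl fun A _ => sum_congr rfl fun B _ => ?_
  ring

lemma MvPolynomial.eq_zero_of_forall_eval_conj {P : MvPolynomial (Fin 2) ℂ}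
    (h : ∀ z, MvPolynomial.eval ![z, conj z] P = 0) : P = 0 := by
  open MvPolynomial in
  set Q : MvPolynomial (Fin 2) ℂ := bind₁ ![X 0 + C Complex.I * X 1, X 0 - C Complex.I * X 1] P
    with hQdef
  have hQ (x : Fin 2 → ℂ) :
      eval x Q = eval ![x 0 + Complex.I * x 1, x 0 - Complex.I * x 1] P := by
    rw [hQdef, MvPolynomial.eval, eval₂Hom_bind₁]
    congr 2
    ext i; fin_cases i <;> simp
  -- at real `(s, t)`, `Q` evaluates `P` at `(z, conj z)` with `z = s + I t`
  have hQ0 : Q = 0 := funext_set (fun _ => Set.range ((↑) : ℝ → ℂ))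
    (fun _ => Set.infinite_range_of_injective Complex.ofReal_injective) fun x hx => by
      obtain ⟨s, hs⟩ := hx 0 trivial
      obtain ⟨t, ht⟩ := hx 1 trivial
      rw [hQ, map_zero, ← h (s + Complex.I * t), ← hs, ← ht]
      congr 2
      ext i; fin_cases i <;> simp [Complex.conj_ofReal, sub_eq_add_neg]
  refine MvPolynomial.funext fun x => ?_
  have := hQ ![(x 0 + x 1) / 2, (x 0 - x 1) / (2 * Complex.I)]
  rw [hQ0, map_zero] at this
  rw [map_zero, this]
  congr 2
  ext i; fin_cases i <;> simp <;> field_simp <;> ring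

theorem linearIndependent_conjMonomial : LinearIndependent ℂ (uncurry conjMonomial) := by
  let ev : MvPolynomial (Fin 2) ℂ →ₗ[ℂ] ℂ → ℂ :=
    LinearMap.pi fun z => (MvPolynomial.aeval ![z, conj z]).toLinearMap
  have hker : LinearMap.ker ev = ⊥ := LinearMap.ker_eq_bot'.mpr fun P hP =>
    MvPolynomial.eq_zero_of_forall_eval_conj fun z => congr_fun hP z
  let exps : ℕ × ℕ → Fin 2 →₀ ℕ := fun pq => Finsupp.equivFunOnFinite.symm ![pq.1, pq.2]
  have hexps : Injective exps := fun a b hab => by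
    simpa [exps] using congrArg (fun d : Fin 2 →₀ ℕ => (d 0, d 1)) hab
  have hev : ev ∘ (MvPolynomial.basisMonomials (Fin 2) ℂ ∘ exps) = uncurry conjMonomial := by
    ext ⟨p, q⟩ z
    simp [ev, exps, conjMonomial, MvPolynomial.aeval_monomial, Finsupp.prod_fintype]
  rw [← hev]
  exact ((MvPolynomial.basisMonomials (Fin 2) ℂ).linearIndependent.comp exps hexps).map' ev hker

lemma adjoin_id_conj_eq_conjPolynomials :
    Subalgebra.toSubmodule (Algebra.adjoin ℂ {(fun z : ℂ => z), (fun z : ℂ => conj z)}) =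
      conjPolynomials := by
  have hmono (p q : ℕ) :
      (fun z : ℂ => z) ^ p * (fun z : ℂ => conj z) ^ q = conjMonomial p q := by
    ext z; simp [conjMonomial]
  rw [Algebra.adjoin_eq_span, conjPolynomials]
  congr 1
  ext g
  simp [Submonoid.mem_closure_pair, hmono]

lemma eval_re_mul_eval_im_mem_conjPolynomials (P Q : ℂ[X]) :
    (fun z : ℂ => P.eval (z.re : ℂ) * Q.eval (z.im : ℂ)) ∈ conjPolynomials := by
  rw [← adjoin_id_conj_eq_conjPolynomials, Subalgebra.mem_toSubmodule]
  set A := Algebra.adjoin ℂ {(fun z : ℂ => z), (fun z : ℂ => conj z)}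
  have hid : (fun z : ℂ => z) ∈ A := Algebra.subset_adjoin (by simp)
  have hconj : (fun z : ℂ => conj z) ∈ A := Algebra.subset_adjoin (by simp)
  have heval (P : ℂ[X]) {φ : ℂ → ℂ} (hφ : φ ∈ A) : (fun z => P.eval (φ z)) ∈ A := by
    convert Algebra.adjoin_le (Set.singleton_subset_iff.mpr hφ)
      (aeval_mem_adjoin_singleton ℂ φ (p := P)) using 1
    ext z
    simp
  have hre : (fun z : ℂ => (z.re : ℂ)) = (2⁻¹ : ℂ) • ((fun z => z) + (fun z => conj z)) := by
    ext z; simp only [Pi.smul_apply, Pi.add_apply, smul_eq_mul, Complex.re_eq_add_conj]; ring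
  have him : (fun z : ℂ => (z.im : ℂ)) =
      (2 * Complex.I)⁻¹ • ((fun z => z) - (fun z => conj z)) := by
    ext z; simp only [Pi.smul_apply, Pi.sub_apply, smul_eq_mul, Complex.im_eq_sub_conj]; ring
  exact A.mul_mem (heval P (hre ▸ A.smul_mem (A.add_mem hid hconj) _))
    (heval Q (him ▸ A.smul_mem (A.sub_mem hid hconj) _))

theorem mem_conjPolynomials_of_fwdDiff_iter_eq_zero {M : ℕ} {f : ℂ → ℂ} (hf : Continuous f)
    (hΔ : ∀ u, Δ_[u] ^[M] f = 0) : f ∈ conjPolynomials := by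
  have hf_eq : f = ∑ j ∈ range M, ∑ l ∈ range M,
      (Δ_[Complex.I] ^[l] (Δ_[1] ^[j] f) 0 / (j.factorial * l.factorial)) •
        fun z : ℂ =>
          (descPochhammer ℂ j).eval (z.re : ℂ) * (descPochhammer ℂ l).eval (z.im : ℂ) := by
    ext z
    simp only [eq_sum_descPochhammer_re_im hf hΔ z, Finset.sum_apply, Pi.smul_apply, smul_eq_mul,
      mul_assoc]
  rw [hf_eq]
  exact Submodule.sum_mem _ fun j _ => Submodule.sum_mem _ fun l _ =>
    Submodule.smul_mem _ _ (eval_re_mul_eval_im_mem_conjPolynomials _ _)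

lemma mem_conjPolynomialsDegreeLT_iff {N : ℕ} {f : ℂ → ℂ} :
    f ∈ conjPolynomialsDegreeLT N ↔ ∃ a : Fin N → Fin N → ℂ, ∀ z : ℂ,
      f z = ∑ i : Fin N, ∑ j : Fin N, a i j * z ^ (i : ℕ) * conj z ^ (j : ℕ) := by
  rw [conjPolynomialsDegreeLT, Submodule.mem_span_range_iff_exists_fun]
  constructor
  · rintro ⟨c, rfl⟩
    exact ⟨fun i j => c (i, j), fun z => by
      simp [Fintype.sum_prod_type, conjMonomial, mul_assoc]⟩
  · rintro ⟨a, ha⟩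
    exact ⟨fun ij => a ij.1 ij.2, by
      ext z; simp [ha, Fintype.sum_prod_type, conjMonomial, mul_assoc]⟩

end ConjMonomial

section Haruki

variable {N : ℕ} {η : ℂ}

lemma sum_range_two_mul_neg_one_pow_mul {R : Type*} [CommRing R] (n : ℕ) (v : ℕ → R) :
    ∑ m ∈ range (2 * n), (-1) ^ m * v m =
      ∑ k ∈ range n, v (2 * k) - ∑ k ∈ range n, v (2 * k + 1) := by
  induction n with
  | zero => simp
  | succ n ih =>
    rw [show 2 * (n + 1) = 2 * n + 1 + 1 by ring, sum_range_succ, sum_range_succ, ih,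
      sum_range_succ, sum_range_succ (fun k => v (2 * k + 1))]
    simp only [pow_succ, pow_mul]
    norm_num
    ring

lemma sum_neg_one_pow_mul_conjMonomial_pow (hN : 0 < N) (hη : IsPrimitiveRoot η (2 * N))
    (a b : ℕ) :
    ∑ m ∈ range (2 * N), (-1) ^ m * conjMonomial a b (η ^ m) =
      if (2 * N : ℤ) ∣ N + a - b then (2 * N : ℂ) else 0 := by
  have hη0 : η ≠ 0 := hη.ne_zero (by omega)
  have hneg : η ^ N = -1 :=
    (hη.pow (by omega) (by ring) : IsPrimitiveRoot (η ^ N) 2).eq_neg_one_of_two_right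
  have hconj : conj η = η⁻¹ :=
    (Complex.inv_eq_conj (Complex.norm_eq_one_of_pow_eq_one hη.pow_eq_one (by omega))).symm
  set ζ := η ^ ((N + a - b : ℤ))
  have hζ : ζ = η ^ N * η ^ a / η ^ b := by
    simp only [ζ]; rw [zpow_sub₀ hη0, zpow_add₀ hη0]; simp
  have hterm (m : ℕ) : (-1) ^ m * conjMonomial a b (η ^ m) = ζ ^ m := by
    rw [hζ, conjMonomial, map_pow, hconj, ← hneg]
    field_simp
    ring
  have hζ1 : ζ = 1 ↔ (2 * N : ℤ) ∣ N + a - b := by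
    rw [hη.zpow_eq_one_iff_dvd]; push_cast; rfl
  have hζ2N : ζ ^ (2 * N) = 1 := by
    rw [← zpow_natCast, ← zpow_mul, mul_comm, zpow_mul, hη.zpow_eq_one, one_zpow]
  rw [sum_congr rfl fun m _ => hterm m]
  split_ifs with hdvd
  · simp [hζ1.mpr hdvd]
  · rw [geom_sum_eq (mt hζ1.mp hdvd), hζ2N, sub_self, zero_div]

lemma sum_mul_conjMonomial_add {ι : Type*} (s : Finset ι) (c w : ι → ℂ) (p q : ℕ) (x y : ℂ) :
    ∑ m ∈ s, c m * conjMonomial p q (x + w m * y) =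
      ∑ A ∈ range (p + 1), ∑ B ∈ range (q + 1),
        (p.choose A * q.choose B * ∑ m ∈ s, c m * conjMonomial (p - A) (q - B) (w m)) *
          conjMonomial A B x * conjMonomial (p - A) (q - B) y := by
  simp only [conjMonomial_add, conjMonomial_mul, mul_sum, sum_mul]
  rw [sum_comm]
  refine sum_congr rfl fun A _ => ?_
  rw [sum_comm]
  refine sum_congr rfl fun B _ => sum_congr rfl fun m _ => ?_
  ring

lemma sum_alternating_conjMonomial_eq_zero (hN : 0 < N) (hη : IsPrimitiveRoot η (2 * N))
    {p q : ℕ} (hp : p < N) (hq : q < N) (x y : ℂ) :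
    ∑ m ∈ range (2 * N), (-1) ^ m * conjMonomial p q (x + η ^ m * y) = 0 := by
  rw [sum_mul_conjMonomial_add]
  refine sum_eq_zero fun A _ => sum_eq_zero fun B _ => ?_
  have hndvd : ¬ (2 * N : ℤ) ∣ N + (p - A : ℕ) - (q - B : ℕ) := fun h => by
    have := Int.eq_zero_of_abs_lt_dvd h (by rw [abs_lt]; omega)
    omega
  rw [sum_neg_one_pow_mul_conjMonomial_pow hN hη, if_neg hndvd]
  simp

lemma exists_sum_alternating_conjMonomial_ne_zero (hN : 0 < N) (hη : IsPrimitiveRoot η (2 * N))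
    {p q : ℕ} (h : N ≤ p ∨ N ≤ q) :
    ∃ c : ℂ, ∑ m ∈ range (2 * N), (-1) ^ m * conjMonomial p q (c + η ^ m) ≠ 0 := by
  by_contra! hzero
  have hcoef := linearIndependent_iff'.mp linearIndependent_conjMonomial
    (range (p + 1) ×ˢ range (q + 1))
    (fun AB => p.choose AB.1 * q.choose AB.2 *
      ∑ m ∈ range (2 * N), (-1) ^ m * conjMonomial (p - AB.1) (q - AB.2) (η ^ m)) (by
      ext c
      have hexp := sum_mul_conjMonomial_add (range (2 * N)) (fun m => (-1) ^ m) (η ^ ·) p q c 1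
      simp only [mul_one] at hexp
      rw [hzero c] at hexp
      simpa [sum_product, conjMonomial] using hexp.symm)
  have hchoose (n k : ℕ) (hk : k ≤ n) : (n.choose k : ℂ) ≠ 0 :=
    Nat.cast_ne_zero.mpr (Nat.choose_pos hk).ne'
  have h2N : (2 * N : ℂ) ≠ 0 := by exact_mod_cast (by omega : 2 * N ≠ 0)
  rcases h with hp | hq
  · have := hcoef (p - N, q) (by simp only [mem_product, mem_range]; omega)
    rw [Nat.sub_sub_self hp, Nat.sub_self, sum_neg_one_pow_mul_conjMonomial_pow hN hη,
      if_pos ⟨1, by push_cast; ring⟩] at this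
    exact mul_ne_zero (mul_ne_zero (hchoose _ _ (Nat.sub_le p N)) (hchoose _ _ le_rfl)) h2N this
  · have := hcoef (p, q - N) (by simp only [mem_product, mem_range]; omega)
    rw [Nat.sub_sub_self hq, Nat.sub_self, sum_neg_one_pow_mul_conjMonomial_pow hN hη,
      if_pos ⟨0, by push_cast; ring⟩] at this
    exact mul_ne_zero (mul_ne_zero (hchoose _ _ le_rfl) (hchoose _ _ (Nat.sub_le q N))) h2N this

lemma fwdDiff_iter_eq_zero_of_alternating (hN : 0 < N) (hη : IsPrimitiveRoot η (2 * N))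
    {f : ℂ → ℂ} (h : ∀ x y, ∑ m ∈ range (2 * N), (-1) ^ m * f (x + η ^ m * y) = 0) (u : ℂ) :
    Δ_[u] ^[2 * N - 1] f = 0 := by
  have hrange : insert 0 ((range (2 * N)).erase 0) = range (2 * N) :=
    insert_erase (mem_range.mpr (by omega))
  have := fwdDiff_iter_eq_zero_of_forall_sum_eq_zero (w := (η ^ ·))
    (g := fun m => (-1 : ℂ) ^ m • f) (notMem_erase 0 (range (2 * N)))
    (by rw [← coe_insert, hrange]; exact hη.injOn_pow)
    (fun x y => by rw [hrange]; simpa using h x y) u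
  simpa [card_erase_of_mem (mem_range.mpr (by omega : 0 < 2 * N))] using this

lemma mem_conjPolynomialsDegreeLT_of_alternating (hN : 0 < N) (hη : IsPrimitiveRoot η (2 * N))
    {f : ℂ → ℂ} (hf : f ∈ conjPolynomials)
    (h : ∀ x y, ∑ m ∈ range (2 * N), (-1) ^ m * f (x + η ^ m * y) = 0) :
    f ∈ conjPolynomialsDegreeLT N := by
  obtain ⟨e, rfl⟩ := Finsupp.mem_span_range_iff_exists_finsupp.mp hf
  have hsupp (pq : ℕ × ℕ) (hpq : pq ∈ e.support) : pq.1 < N ∧ pq.2 < N := by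
    by_contra hbig
    obtain ⟨c, hc⟩ := exists_sum_alternating_conjMonomial_ne_zero hN hη
      (by omega : N ≤ pq.1 ∨ N ≤ pq.2)
    refine mul_ne_zero (Finsupp.mem_support_iff.mp hpq) hc
      (linearIndependent_iff'.mp linearIndependent_conjMonomial e.support
        (fun pq => e pq * ∑ m ∈ range (2 * N), (-1) ^ m * conjMonomial pq.1 pq.2 (c + η ^ m))
        ?_ pq hpq)
    ext z
    simp only [Finset.sum_apply, Pi.smul_apply, smul_eq_mul, uncurry_def, Pi.zero_apply]
    calc _ = ∑ m ∈ range (2 * N), (-1) ^ m *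
          ∑ pq ∈ e.support, e pq * conjMonomial pq.1 pq.2 (c * z + η ^ m * z) := by
          simp only [mul_sum, sum_mul]
          rw [sum_comm]
          refine sum_congr rfl fun m _ => sum_congr rfl fun pq _ => ?_
          rw [show c * z + η ^ m * z = (c + η ^ m) * z by ring, conjMonomial_mul]
          ring
      _ = 0 := by simpa [Finsupp.sum, uncurry_def] using h (c * z) z
  exact Submodule.sum_mem _ fun pq hpq => Submodule.smul_mem _ _ (Submodule.subset_span
    ⟨(⟨pq.1, (hsupp pq hpq).1⟩, ⟨pq.2, (hsupp pq hpq).2⟩), rfl⟩)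

lemma alternating_of_mem_conjPolynomialsDegreeLT (hN : 0 < N) (hη : IsPrimitiveRoot η (2 * N))
    {f : ℂ → ℂ} (hf : f ∈ conjPolynomialsDegreeLT N) (x y : ℂ) :
    ∑ m ∈ range (2 * N), (-1) ^ m * f (x + η ^ m * y) = 0 := by
  induction hf using Submodule.span_induction with
  | mem g hg =>
    obtain ⟨⟨i, j⟩, rfl⟩ := hg
    exact sum_alternating_conjMonomial_eq_zero hN hη i.isLt j.isLt x y
  | zero => simp
  | add g g' _ _ hg hg' => simp [mul_add, sum_add_distrib, hg, hg']
  | smul c g _ hg => simp [mul_left_comm _ c, ← mul_sum, hg]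

end Haruki

/-- A continuous `f : ℂ → ℂ` satisfies the Haruki functional equation (for a primitive
`2N`-th root of unity `η`) if and only if `f(z) = ∑_{i,j=0}^{N-1} a_{i,j} z^i conj(z)^j`. -/
theorem haruki_continuous_solutions (N : ℕ) (hN : 1 ≤ N) (η : ℂ)
    (hη : IsPrimitiveRoot η (2 * N)) (f : ℂ → ℂ) (hf : Continuous f) :
    (∀ x y : ℂ, ∑ k ∈ Finset.range N, f (x + η ^ (2 * k) * y) =
        ∑ k ∈ Finset.range N, f (x + η ^ (2 * k + 1) * y)) ↔
      ∃ a : Fin N → Fin N → ℂ, ∀ z : ℂ,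
        f z = ∑ i : Fin N, ∑ j : Fin N,
          a i j * z ^ (i : ℕ) * (starRingEnd ℂ) z ^ (j : ℕ) := by
  have halt (x y : ℂ) : (∑ k ∈ range N, f (x + η ^ (2 * k) * y) =
      ∑ k ∈ range N, f (x + η ^ (2 * k + 1) * y)) ↔
      ∑ m ∈ range (2 * N), (-1) ^ m * f (x + η ^ m * y) = 0 := by
    rw [sum_range_two_mul_neg_one_pow_mul N (fun m => f (x + η ^ m * y)), sub_eq_zero]
  simp only [halt, ← mem_conjPolynomialsDegreeLT_iff]
  refine ⟨fun h => mem_conjPolynomialsDegreeLT_of_alternating hN hη ?_ h,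
    alternating_of_mem_conjPolynomialsDegreeLT hN hη⟩
  exact mem_conjPolynomials_of_fwdDiff_iter_eq_zero hf (fwdDiff_iter_eq_zero_of_alternating hN hη h)
end

section
/- Let N ≥ 1 and let η ∈ ℂ be a primitive 2N-th root of unity. An entire function f : ℂ → ℂ (i.e., f is complex-differentiable on all of ℂ) satisfies the Haruki functional equation ∑_{k=0}^{N-1} f(x + η^{2k}y) = ∑_{k=0}^{N-1} f(x + η^{2k+1}y) for all x,y ∈ ℂ if and only if f is a complex polynomial of degree at most N-1, i.e., there exist a_0,…,a_{N-1} ∈ ℂ with f(z) = a_0 + a_1 z + ⋯ + a_{N-1} z^{N-1} for all z ∈ ℂ. -/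
/-!
The `N`-th derivative in `y` at `y = 0` of the difference of the two sides is
`(∑ₖ η^{2kN} - ∑ₖ η^{(2k+1)N}) f⁽ᴺ⁾(x) = 2N f⁽ᴺ⁾(x)`, because `η^N = -1`; so the equation forces
`f⁽ᴺ⁾ = 0`, and an entire function with `f⁽ᴺ⁾ = 0` is its Taylor polynomial of degree `< N`.
Conversely, if `f⁽ᴺ⁾ = 0` then the `m`-th derivatives at `y = 0` of both sides agree: for `m ≥ N`
both vanish, and for `m < N` the power sums `∑ₖ η^{2km}` and `∑ₖ η^{(2k+1)m}` are equal (both `N`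
for `m = 0`, both `0` otherwise). Two entire functions with the same Taylor series coincide.
-/

open Finset
open scoped Nat

section IteratedDeriv

variable {𝕜 F : Type*} [NontriviallyNormedField 𝕜] [NormedAddCommGroup F] [NormedSpace 𝕜 F]

theorem iteratedDeriv_eq_zero_of_le {f : 𝕜 → F} {n m : ℕ} (h : iteratedDeriv n f = 0)
    (hnm : n ≤ m) : iteratedDeriv m f = 0 := by
  obtain ⟨k, rfl⟩ := Nat.exists_eq_add_of_le hnm
  rw [iteratedDeriv_eq_iterate] at h ⊢
  rw [add_comm, Function.iterate_add_apply, h]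
  exact Function.iterate_fixed (by simp) k

theorem iteratedDeriv_comp_const_add_mul_zero {f : 𝕜 → 𝕜} {n : ℕ} (hf : ContDiff 𝕜 n f)
    (x c : 𝕜) : iteratedDeriv n (fun y => f (x + c * y)) 0 = c ^ n * iteratedDeriv n f x := by
  have hshift : ContDiff 𝕜 n (fun t => f (x + t)) := hf.comp (contDiff_const.add contDiff_id)
  rw [congrFun (iteratedDeriv_comp_const_mul hshift c) 0, iteratedDeriv_comp_const_add]
  simp

theorem iteratedDeriv_sum_comp_const_add_mul_zero {ι : Type*} {f : 𝕜 → 𝕜} {n : ℕ}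
    (hf : ContDiff 𝕜 n f) (s : Finset ι) (x : 𝕜) (c : ι → 𝕜) :
    iteratedDeriv n (fun y => ∑ k ∈ s, f (x + c k * y)) 0 =
      (∑ k ∈ s, c k ^ n) * iteratedDeriv n f x := by
  rw [iteratedDeriv_fun_sum (f := fun k y => f (x + c k * y))
    fun k _ => (hf.comp (contDiff_const.add (contDiff_const.mul contDiff_id))).contDiffAt, sum_mul]
  exact sum_congr rfl fun k _ => iteratedDeriv_comp_const_add_mul_zero hf x (c k)

end IteratedDeriv

namespace Differentiable

theorem eq_of_iteratedDeriv_eq {E : Type*} [NormedAddCommGroup E] [NormedSpace ℂ E]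
    [CompleteSpace E] {f g : ℂ → E} (hf : Differentiable ℂ f) (hg : Differentiable ℂ g) (c : ℂ)
    (h : ∀ n, iteratedDeriv n f c = iteratedDeriv n g c) : f = g :=
  funext fun z => (Complex.hasSum_taylorSeries_of_entire hf c z).unique
    (by simpa only [h] using Complex.hasSum_taylorSeries_of_entire hg c z)

theorem iteratedDeriv_eq_zero_iff {f : ℂ → ℂ} (hf : Differentiable ℂ f) (n : ℕ) :
    iteratedDeriv n f = 0 ↔ ∃ a : Fin n → ℂ, ∀ z, f z = ∑ i : Fin n, a i * z ^ (i : ℕ) := by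
  constructor
  · intro h
    refine ⟨fun i => (i ! : ℂ)⁻¹ * iteratedDeriv i f 0, fun z => ?_⟩
    have htaylor : HasSum (fun i : ℕ => (i ! : ℂ)⁻¹ • (z - 0) ^ i • iteratedDeriv i f 0)
        (∑ i ∈ range n, (i ! : ℂ)⁻¹ • (z - 0) ^ i • iteratedDeriv i f 0) :=
      hasSum_sum_of_ne_finset_zero fun i hi => by
        simp [iteratedDeriv_eq_zero_of_le h (not_lt.mp (by simpa using hi))]
    rw [(Complex.hasSum_taylorSeries_of_entire hf 0 z).unique htaylor,
      ← Fin.sum_univ_eq_sum_range]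
    simp only [sub_zero, smul_eq_mul]
    exact sum_congr rfl fun i _ => by ring
  · rintro ⟨a, ha⟩
    funext x
    rw [show f = fun z => ∑ i : Fin n, a i * z ^ (i : ℕ) from funext ha,
      iteratedDeriv_fun_sum fun i _ => (contDiff_const.mul (contDiff_id.pow _)).contDiffAt]
    simp [iteratedDeriv_const_mul_field, Nat.descFactorial_eq_zero_iff_lt.mpr]

end Differentiable

theorem sum_pow_odd_eq_mul_sum_pow_even {R : Type*} [CommSemiring R] (η : R) (N m : ℕ) :
    ∑ k ∈ range N, (η ^ (2 * k + 1)) ^ m = η ^ m * ∑ k ∈ range N, (η ^ (2 * k)) ^ m := by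
  rw [mul_sum]
  exact sum_congr rfl fun k _ => by ring

namespace IsPrimitiveRoot

variable {K : Type*} [Field K] {η : K} {N : ℕ}

theorem pow_eq_neg_one_of_two_mul (hη : IsPrimitiveRoot η (2 * N)) (hN : 0 < N) :
    η ^ N = -1 :=
  (hη.pow (by omega) (mul_comm 2 N)).eq_neg_one_of_two_right

theorem sum_pow_even_self (hη : IsPrimitiveRoot η (2 * N)) :
    ∑ k ∈ range N, (η ^ (2 * k)) ^ N = N := by
  have hterm : ∀ k, (η ^ (2 * k)) ^ N = 1 := fun k => by
    rw [← pow_mul, mul_right_comm, pow_mul, hη.pow_eq_one, one_pow]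
  simp [hterm]

theorem sum_pow_even_eq_zero (hη : IsPrimitiveRoot η (2 * N)) {m : ℕ} (hm : 0 < m)
    (hmN : m < N) : ∑ k ∈ range N, (η ^ (2 * k)) ^ m = 0 := by
  have hη2 : IsPrimitiveRoot (η ^ 2) N := hη.pow (by omega) rfl
  have hζ : (η ^ 2) ^ m ≠ 1 := hη2.pow_ne_one_of_pos_of_lt hm.ne' hmN
  have hζN : ((η ^ 2) ^ m) ^ N = 1 := by rw [pow_right_comm, hη2.pow_eq_one, one_pow]
  simp_rw [show ∀ k, (η ^ (2 * k)) ^ m = ((η ^ 2) ^ m) ^ k from fun k => by ring]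
  rw [geom_sum_eq hζ, hζN, sub_self, zero_div]

theorem sum_pow_even_eq_sum_pow_odd (hη : IsPrimitiveRoot η (2 * N)) {m : ℕ} (hmN : m < N) :
    ∑ k ∈ range N, (η ^ (2 * k)) ^ m = ∑ k ∈ range N, (η ^ (2 * k + 1)) ^ m := by
  rw [sum_pow_odd_eq_mul_sum_pow_even]
  rcases Nat.eq_zero_or_pos m with rfl | hm
  · simp
  · rw [hη.sum_pow_even_eq_zero hm hmN, mul_zero]

end IsPrimitiveRoot

/-- An entire function `f : ℂ → ℂ` satisfies the Haruki functional equation (for a primitive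
`2N`-th root of unity `η`) if and only if `f` is a polynomial of degree at most `N - 1`. -/
theorem haruki_entire_solutions (N : ℕ) (hN : 1 ≤ N) (η : ℂ)
    (hη : IsPrimitiveRoot η (2 * N)) (f : ℂ → ℂ) (hf : Differentiable ℂ f) :
    (∀ x y : ℂ, ∑ k ∈ Finset.range N, f (x + η ^ (2 * k) * y) =
        ∑ k ∈ Finset.range N, f (x + η ^ (2 * k + 1) * y)) ↔
      ∃ a : Fin N → ℂ, ∀ z : ℂ, f z = ∑ i : Fin N, a i * z ^ (i : ℕ) := by
  rw [← hf.iteratedDeriv_eq_zero_iff]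
  constructor
  · intro h
    funext x
    have hderiv := congrArg (iteratedDeriv N · 0) (funext (h x))
    simp only [iteratedDeriv_sum_comp_const_add_mul_zero hf.contDiff,
      sum_pow_odd_eq_mul_sum_pow_even, hη.pow_eq_neg_one_of_two_mul hN, hη.sum_pow_even_self]
      at hderiv
    have h2N : (2 * N : ℂ) * iteratedDeriv N f x = 0 := by linear_combination hderiv
    simpa [Nat.one_le_iff_ne_zero.mp hN] using h2N
  · intro h x
    suffices (fun y => ∑ k ∈ range N, f (x + η ^ (2 * k) * y)) =
        fun y => ∑ k ∈ range N, f (x + η ^ (2 * k + 1) * y) from congrFun this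
    refine Differentiable.eq_of_iteratedDeriv_eq (by fun_prop) (by fun_prop) 0 fun m => ?_
    rw [iteratedDeriv_sum_comp_const_add_mul_zero hf.contDiff,
      iteratedDeriv_sum_comp_const_add_mul_zero hf.contDiff]
    rcases lt_or_ge m N with hm | hm
    · rw [hη.sum_pow_even_eq_sum_pow_odd hm]
    · simp [iteratedDeriv_eq_zero_of_le h hm]
end

section
/- Let N ≥ 1 and let θ ∈ ℂ be a primitive N-th root of unity. An entire function f : ℂ → ℂ (i.e., f is complex-differentiable on all of ℂ) satisfies the Kakutani–Nagumo–Walsh functional equation (1/N)∑_{k=0}^{N-1} f(x + θ^k y) = f(x) for all x,y ∈ ℂ if and only if f is a complex polynomial of degree at most N-1, i.e., there exist a_0,…,a_{N-1} ∈ ℂ with f(z) = a_0 + a_1 z + ⋯ + a_{N-1} z^{N-1} for all z ∈ ℂ. -/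
/-!
Differentiating `∑ₖ f (x + θᵏ y) = N f x` in `y` repeatedly gives `∑ₖ θᵏᵐ f⁽ᵐ⁾ (x + θᵏ y) = 0` for
every `m ≥ 1`; at `m = N`, `y = 0` this reads `N f⁽ᴺ⁾ x = 0`, so the Taylor series of `f` stops
before degree `N`. Conversely, in the binomial expansion of `(x + θᵏ y)ⁱ` with `i < N`, averaging
over `k` kills every term `θᵏʲ yʲ` with `0 < j`, since `∑ₖ (θʲ)ᵏ = 0` for `0 < j < N`.
-/

open Finset

namespace IsPrimitiveRoot

variable {R : Type*} [CommRing R] [IsDomain R] {θ : R} {N : ℕ}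

theorem sum_range_pow_pow (hθ : IsPrimitiveRoot θ N) {m : ℕ} (hm : m < N) :
    ∑ k ∈ range N, (θ ^ m) ^ k = if m = 0 then (N : R) else 0 := by
  split_ifs with hm0
  · simp [hm0]
  refine eq_zero_of_ne_zero_of_mul_right_eq_zero
    (sub_ne_zero_of_ne (hθ.pow_ne_one_of_pos_of_lt hm0 hm)) ?_
  rw [geom_sum_mul, pow_right_comm, hθ.pow_eq_one, one_pow, sub_self]

theorem sum_range_add_mul_pow (hθ : IsPrimitiveRoot θ N) {i : ℕ} (hi : i < N) (x y : R) :
    ∑ k ∈ range N, (x + θ ^ k * y) ^ i = N * x ^ i := by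
  have hterm : ∀ j ∈ range (i + 1), ∑ k ∈ range N, x ^ j * (θ ^ k * y) ^ (i - j) * i.choose j
      = x ^ j * y ^ (i - j) * i.choose j * if i - j = 0 then (N : R) else 0 := by
    intro j _
    rw [← hθ.sum_range_pow_pow (by omega : i - j < N), mul_sum]
    refine sum_congr rfl fun k _ ↦ ?_
    rw [mul_pow, pow_right_comm]
    ring
  simp_rw [add_pow]
  rw [sum_comm, sum_congr rfl hterm, sum_eq_single i]
  · simp [mul_comm]
  · intro j hj hji
    simp [show i - j ≠ 0 by have := mem_range.mp hj; omega]
  · simp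

theorem sum_range_sum_mul_add_mul_pow (hθ : IsPrimitiveRoot θ N) (a : Fin N → R) (x y : R) :
    ∑ k ∈ range N, ∑ i : Fin N, a i * (x + θ ^ k * y) ^ (i : ℕ)
      = N * ∑ i : Fin N, a i * x ^ (i : ℕ) := by
  rw [sum_comm, mul_sum]
  refine sum_congr rfl fun i _ ↦ ?_
  rw [← mul_sum, hθ.sum_range_add_mul_pow i.2]
  ring

end IsPrimitiveRoot

section IteratedDeriv

variable {𝕜 ι : Type*} [NontriviallyNormedField 𝕜] {f : 𝕜 → 𝕜} (s : Finset ι) (w : ι → 𝕜) (x : 𝕜)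

theorem hasDerivAt_sum_pow_mul_iteratedDeriv (hf : ContDiff 𝕜 ⊤ f) (m : ℕ) (y : 𝕜) :
    HasDerivAt (fun y ↦ ∑ k ∈ s, w k ^ m * iteratedDeriv m f (x + w k * y))
      (∑ k ∈ s, w k ^ (m + 1) * iteratedDeriv (m + 1) f (x + w k * y)) y := by
  refine HasDerivAt.fun_sum fun k _ ↦ ?_
  have hinner : HasDerivAt (fun y ↦ x + w k * y) (w k) y := by
    simpa using ((hasDerivAt_id y).const_mul (w k)).const_add x
  have houter := (hf.differentiable_iteratedDeriv m (by simp)).differentiableAt.hasDerivAt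
    (x := x + w k * y)
  rw [iteratedDeriv_succ, pow_succ, mul_assoc, mul_comm (w k)]
  exact (houter.comp y hinner).const_mul _

theorem sum_pow_mul_iteratedDeriv_eq_zero (hf : ContDiff 𝕜 ⊤ f)
    {c : 𝕜} (hconst : ∀ y, ∑ k ∈ s, f (x + w k * y) = c) {m : ℕ} (hm : 0 < m) (y : 𝕜) :
    ∑ k ∈ s, w k ^ m * iteratedDeriv m f (x + w k * y) = 0 := by
  induction m, Nat.one_le_iff_ne_zero.mpr hm.ne' using Nat.le_induction generalizing y with
  | base =>
    refine (hasDerivAt_sum_pow_mul_iteratedDeriv s w x hf 0 y).unique ?_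
    convert hasDerivAt_const y c using 2 with y
    simp [hconst]
  | succ m hm1 ih =>
    refine (hasDerivAt_sum_pow_mul_iteratedDeriv s w x hf m y).unique ?_
    convert hasDerivAt_const y (0 : 𝕜) using 2 with y
    exact ih hm1 y

end IteratedDeriv

theorem iteratedDeriv_eq_zero_of_le_s5 {𝕜 F : Type*} [NontriviallyNormedField 𝕜]
    [NormedAddCommGroup F] [NormedSpace 𝕜 F] {f : 𝕜 → F} {N n : ℕ} (hN : iteratedDeriv N f = 0)
    (hn : N ≤ n) :
    iteratedDeriv n f = 0 := by
  induction n, hn using Nat.le_induction with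
  | base => exact hN
  | succ n _ ih => rw [iteratedDeriv_succ, ih]; exact deriv_const' 0

theorem Differentiable.exists_eq_sum_pow_of_iteratedDeriv_eq_zero {f : ℂ → ℂ}
    (hf : Differentiable ℂ f) {N : ℕ} (hN : iteratedDeriv N f = 0) :
    ∃ a : Fin N → ℂ, ∀ z, f z = ∑ i : Fin N, a i * z ^ (i : ℕ) := by
  refine ⟨fun i ↦ ((i : ℕ).factorial : ℂ)⁻¹ * iteratedDeriv i f 0, fun z ↦ ?_⟩
  rw [← Complex.taylorSeries_eq_of_entire' 0 z hf, tsum_eq_sum (s := range N),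
    ← Fin.sum_univ_eq_sum_range]
  · simp
  · intro n hn
    simp [iteratedDeriv_eq_zero_of_le_s5 hN (by simpa using hn)]

/-- An entire function `f : ℂ → ℂ` satisfies the Kakutani–Nagumo–Walsh functional equation
(for a primitive `N`-th root of unity `θ`) if and only if `f` is a polynomial of degree
at most `N - 1`. -/
theorem knw_entire_solutions (N : ℕ) (hN : 1 ≤ N) (θ : ℂ)
    (hθ : IsPrimitiveRoot θ N) (f : ℂ → ℂ) (hf : Differentiable ℂ f) :
    (∀ x y : ℂ, (N : ℂ)⁻¹ * ∑ k ∈ Finset.range N, f (x + θ ^ k * y) = f x) ↔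
      ∃ a : Fin N → ℂ, ∀ z : ℂ, f z = ∑ i : Fin N, a i * z ^ (i : ℕ) := by
  have hN0 : (N : ℂ) ≠ 0 := by exact_mod_cast (by omega : N ≠ 0)
  constructor
  · intro h
    refine hf.exists_eq_sum_pow_of_iteratedDeriv_eq_zero (funext fun x ↦ ?_)
    have hconst y : ∑ k ∈ range N, f (x + θ ^ k * y) = N * f x :=
      (inv_mul_eq_iff_eq_mul₀ hN0).mp (h x y)
    have hsum := sum_pow_mul_iteratedDeriv_eq_zero (range N) (θ ^ ·) x hf.contDiff hconst hN 0
    simpa [pow_right_comm _ _ N, hθ.pow_eq_one, hN0] using hsum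
  · rintro ⟨a, ha⟩ x y
    simp only [ha]
    rw [hθ.sum_range_sum_mul_add_mul_pow, inv_mul_cancel_left₀ hN0]
end

section
/- Let d ≥ 1 and N ≥ 1. A continuous function f : ℝ^d → ℝ satisfies Fréchet's functional equation with fixed step, Δ_h^N f(x) = ∑_{k=0}^{N} binom(N,k)(−1)^{N−k} f(x+kh) = 0 for all x,h ∈ ℝ^d, if and only if f is (the function associated to) a real polynomial in d variables of total degree at most N−1. -/
/-!
On every arithmetic progression `x₀ + j s` a solution is, by Newton's forward-difference
formula, a polynomial in `j` of degree `< N`. In one variable, comparing these polynomials on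
the grids `j / m - K` with the Lagrange interpolant `q` of the values at `0, …, N - 1` shows
that the solution agrees with `q` on `ℚ`, hence everywhere by continuity. In `d + 1` variables,
the slices with fixed first coordinate are polynomials by induction, and interpolating in the
first coordinate at `0, …, N - 1` assembles them into a single polynomial `p`.

For a polynomial `p`, the restriction `t ↦ p (x + t v)` to a line is a polynomial in `t`, and its
`N`-th differences vanish iff its degree is `< N` (the `k`-th difference of a polynomial of
degree `k` is `k!` times its leading coefficient). Since the homogeneous component of `p` of
degree `k`, evaluated at `v`, is the coefficient of `t ^ k` in `p (t v)`, this bounds the total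
degree of `p`.
-/

open Finset Function
open scoped Polynomial

section FwdDiff

variable {M M' G : Type*} [AddCommMonoid M] [AddCommMonoid M'] [AddCommGroup G]

theorem fwdDiff_iter_comp_of_semiconj {φ : M → M'} {h : M} {h' : M'}
    (hφ : Semiconj φ (· + h) (· + h')) (f : M' → G) (n : ℕ) (x : M) :
    (fwdDiff h)^[n] (f ∘ φ) x = (fwdDiff h')^[n] f (φ x) := by
  induction n generalizing f with
  | zero => rfl
  | succ n ih =>
    have hcomp : fwdDiff h (f ∘ φ) = fwdDiff h' f ∘ φ :=
      funext fun y => by simp [fwdDiff, hφ y]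
    rw [iterate_succ_apply, iterate_succ_apply, hcomp, ih]

theorem fwdDiff_iter_eq_zero_of_le_s7 {h : M} {f : M → G} {m n : ℕ} (hmn : m ≤ n)
    (hf : (fwdDiff h)^[m] f = 0) : (fwdDiff h)^[n] f = 0 := by
  rw [← Nat.sub_add_cancel hmn, iterate_add_apply, hf]
  exact iterate_fixed (funext fun _ => sub_self (0 : G)) _

theorem fwdDiff_iter_eq_sum_choose {R : Type*} [CommRing R] (f : M → R) (n : ℕ) (x h : M) :
    (fwdDiff h)^[n] f x =
      ∑ k ∈ range (n + 1), (n.choose k : R) * (-1) ^ (n - k) * f (x + k • h) := by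
  rw [fwdDiff_iter_eq_sum_shift]
  refine sum_congr rfl fun k _ => ?_
  rw [zsmul_eq_mul]
  push_cast
  ring

end FwdDiff

theorem Fin.cons_add_cons {n : ℕ} {α : Type*} [Add α] (x y : α) (v w : Fin n → α) :
    (Fin.cons x v : Fin (n + 1) → α) + Fin.cons y w = Fin.cons (x + y) (v + w) :=
  Matrix.cons_add_cons x v y w

theorem Rat.exists_eq_div_sub_nat (r : ℚ) : ∃ K j m : ℕ, 0 < m ∧ r = j / m - K := by
  refine ⟨r.num.natAbs, (r.num + r.num.natAbs * r.den).toNat, r.den, r.den_pos, ?_⟩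
  have hnonneg : 0 ≤ r.num + r.num.natAbs * r.den := by
    have : (1 : ℤ) ≤ r.den := by exact_mod_cast r.den_pos
    rw [Int.natCast_natAbs]
    nlinarith [neg_le_abs r.num, abs_nonneg r.num]
  rw [← Int.cast_natCast, Int.toNat_of_nonneg hnonneg]
  nth_rewrite 1 [← Rat.num_div_den r]
  have : (r.den : ℚ) ≠ 0 := by exact_mod_cast r.den_ne_zero
  field_simp
  push_cast [Nat.cast_natAbs]
  ring

namespace Polynomial

theorem natDegree_lt_of_fwdDiff_iter_eval_eq_zero {R : Type*} [CommRing R] [IsDomain R]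
    [CharZero R] {P : R[X]} {n : ℕ} (hn : 0 < n) (hP : (fwdDiff 1)^[n] P.eval = 0) :
    P.natDegree < n := by
  by_contra! hle
  have hlc : P.leadingCoeff * (P.natDegree.factorial : R) = 0 := by
    simpa using congrFun (P.fwdDiff_iter_degree_eq_factorial.symm.trans
      (fwdDiff_iter_eq_zero_of_le_s7 hle hP)) 0
  have hP0 : P = 0 := by simpa [Nat.factorial_ne_zero] using hlc
  rw [hP0, natDegree_zero] at hle
  omega

theorem exists_degree_lt_eval_eq_of_fwdDiff_iter_eq_zero {K : Type*} [Field K] [CharZero K]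
    {n : ℕ} {w : ℕ → K} (hw : (fwdDiff 1)^[n] w = 0) :
    ∃ P : K[X], P.degree < n ∧ ∀ j : ℕ, w j = P.eval (j : K) := by
  -- the Newton series `w j = ∑ k, (j choose k) Δᵏ w 0`, which stops at `k = n - 1`
  refine ⟨∑ k ∈ range n, ((fwdDiff 1)^[k] w 0 / k.factorial) • descPochhammer K k,
    ?_, fun j => ?_⟩
  · rw [← mem_degreeLT]
    refine Submodule.sum_mem _ fun k hk => Submodule.smul_mem _ _ ?_
    rw [mem_degreeLT, degree_eq_natDegree (monic_descPochhammer K k).ne_zero,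
      descPochhammer_natDegree]
    exact_mod_cast mem_range.1 hk
  · calc w j = ∑ k ∈ range (j + 1), (j.choose k : K) * (fwdDiff 1)^[k] w 0 := by
          simpa [nsmul_eq_mul] using shift_eq_sum_fwdDiff_iter 1 w j 0
      _ = ∑ k ∈ range (n + (j + 1)), (j.choose k : K) * (fwdDiff 1)^[k] w 0 := by
          refine sum_subset (range_mono (by omega)) fun k _ hk => ?_
          rw [Nat.choose_eq_zero_of_lt (by simpa using hk), Nat.cast_zero, zero_mul]
      _ = ∑ k ∈ range n, (j.choose k : K) * (fwdDiff 1)^[k] w 0 := by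
          refine (sum_subset (range_mono (by omega)) fun k _ hk => ?_).symm
          rw [fwdDiff_iter_eq_zero_of_le_s7 (by simpa using hk) hw, Pi.zero_apply, mul_zero]
      _ = _ := by
          rw [eval_finsetSum]
          refine sum_congr rfl fun k _ => ?_
          rw [eval_smul, smul_eq_mul, Nat.cast_choose_eq_descPochhammer_div]
          ring

end Polynomial

namespace MvPolynomial

variable {σ R : Type*} [CommRing R]

noncomputable def restrictLine (x v : σ → R) (p : MvPolynomial σ R) : R[X] :=
  aeval (fun i => Polynomial.C (v i) * Polynomial.X + Polynomial.C (x i)) p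

theorem eval_restrictLine (x v : σ → R) (p : MvPolynomial σ R) (t : R) :
    (restrictLine x v p).eval t = eval (x + t • v) p := by
  rw [restrictLine, ← Polynomial.coe_aeval_eq_eval, comp_aeval_apply, aeval_eq_eval₂Hom]
  congr 2 with i
  simp only [map_add, map_mul, Polynomial.aeval_C, Polynomial.aeval_X, Pi.add_apply, Pi.smul_apply,
    smul_eq_mul, Algebra.algebraMap_self, RingHom.id_apply]
  ring

theorem natDegree_restrictLine_le (x v : σ → R) (p : MvPolynomial σ R) :
    (restrictLine x v p).natDegree ≤ p.totalDegree := by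
  conv_lhs => rw [restrictLine, p.as_sum, map_sum]
  refine Polynomial.natDegree_sum_le_of_forall_le _ _ fun μ hμ => ?_
  rw [aeval_monomial, Polynomial.algebraMap_eq]
  refine (Polynomial.natDegree_C_mul_le _ _).trans ((Polynomial.natDegree_prod_le _ _).trans ?_)
  refine le_trans (sum_le_sum fun i _ => ?_) (le_totalDegree hμ)
  exact (Polynomial.natDegree_pow_le_of_le _ Polynomial.natDegree_linear_le).trans_eq (mul_one _)

theorem coeff_restrictLine_zero (v : σ → R) (p : MvPolynomial σ R) (n : ℕ) :
    (restrictLine 0 v p).coeff n = eval v (homogeneousComponent n p) := by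
  induction p using MvPolynomial.induction_on' with
  | monomial μ c =>
    have hline : restrictLine 0 v (monomial μ c)
        = Polynomial.C (eval v (monomial μ c)) * Polynomial.X ^ μ.degree := by
      simp only [restrictLine, Pi.zero_apply, map_zero, add_zero, aeval_monomial, eval_monomial,
        Finsupp.prod, mul_pow, prod_mul_distrib, ← Polynomial.C_pow, ← map_prod,
        prod_pow_eq_pow_sum, Polynomial.algebraMap_eq, ← mul_assoc, ← Polynomial.C_mul]
      rfl
    rw [hline, Polynomial.coeff_C_mul_X_pow,
      homogeneousComponent_of_mem (isHomogeneous_monomial c rfl)]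
    split_ifs
    · rfl
    · exact (map_zero _).symm
  | add p q hp hq =>
    rw [restrictLine, map_add, Polynomial.coeff_add, ← restrictLine, ← restrictLine, hp, hq,
      map_add, map_add]

theorem fwdDiff_iter_eval_restrictLine (x v : σ → R) (p : MvPolynomial σ R) (n : ℕ) (t : R) :
    (fwdDiff 1)^[n] (restrictLine x v p).eval t = (fwdDiff v)^[n] (eval · p) (x + t • v) := by
  have hφ : Semiconj (fun t : R => x + t • v) (· + 1) (· + v) := fun t => by
    simp only [add_smul, one_smul, add_assoc]
  have hline : (restrictLine x v p).eval = (eval · p) ∘ fun t => x + t • v :=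
    _root_.funext (eval_restrictLine x v p)
  rw [hline, fwdDiff_iter_comp_of_semiconj hφ]

theorem totalDegree_le_of_forall_natDegree_restrictLine_le [IsDomain R] [Infinite R]
    {p : MvPolynomial σ R} {n : ℕ} (h : ∀ v, (restrictLine 0 v p).natDegree ≤ n) :
    p.totalDegree ≤ n := by
  have hcomp : ∀ k, n < k → homogeneousComponent k p = 0 := fun k hk => funext fun v => by
    rw [map_zero, ← coeff_restrictLine_zero,
      Polynomial.coeff_eq_zero_of_natDegree_lt ((h v).trans_lt hk)]
  refine Finset.sup_le fun μ hμ => ?_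
  by_contra! hlt
  change n < μ.degree at hlt
  refine mem_support_iff.1 hμ ?_
  have := coeff_homogeneousComponent (φ := p) (n := μ.degree) μ
  rwa [if_pos rfl, hcomp _ hlt, coeff_zero, eq_comm] at this

theorem fwdDiff_iter_eval_eq_zero_iff_totalDegree_lt [IsDomain R] [CharZero R]
    {p : MvPolynomial σ R} {n : ℕ} (hn : 0 < n) :
    (∀ x v, (fwdDiff v)^[n] (eval · p) x = 0) ↔ p.totalDegree < n := by
  constructor
  · intro h
    suffices p.totalDegree ≤ n - 1 by omega
    refine totalDegree_le_of_forall_natDegree_restrictLine_le fun v => Nat.le_sub_one_of_lt ?_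
    refine Polynomial.natDegree_lt_of_fwdDiff_iter_eval_eq_zero hn (_root_.funext fun t => ?_)
    rw [fwdDiff_iter_eval_restrictLine, h, Pi.zero_apply]
  · intro hp x v
    have := fwdDiff_iter_eval_restrictLine x v p n 0
    rwa [zero_smul, add_zero, Polynomial.fwdDiff_iter_eq_zero_of_degree_lt
      ((natDegree_restrictLine_le x v p).trans_lt hp), Pi.zero_apply, eq_comm] at this

end MvPolynomial

theorem apply_ratCast_eq_eval_of_fwdDiff_iter_eq_zero {g : ℝ → ℝ} {n : ℕ}
    (hΔ : ∀ x h, (fwdDiff h)^[n] g x = 0) {q : ℝ[X]} (hq : q.degree < n)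
    (hnode : ∀ i < n, g i = q.eval (i : ℝ)) (r : ℚ) : g r = q.eval (r : ℝ) := by
  obtain ⟨K, j, m, hm, rfl⟩ := Rat.exists_eq_div_sub_nat r
  set φ : ℕ → ℝ := fun j => j / m - K
  have hφ : Semiconj φ (· + 1) (· + 1 / m) := fun j => by simp only [φ]; push_cast; ring
  obtain ⟨P, hPdeg, hP⟩ := Polynomial.exists_degree_lt_eval_eq_of_fwdDiff_iter_eq_zero
    (w := g ∘ φ) (funext fun j => by rw [fwdDiff_iter_comp_of_semiconj hφ, hΔ]; rfl)
  set Q := q.comp (Polynomial.C (m : ℝ)⁻¹ * Polynomial.X + Polynomial.C (-K : ℝ))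
  have hQ (j : ℕ) : Q.eval (j : ℝ) = q.eval (φ j) := by
    rw [Polynomial.eval_comp]
    congr 1
    simp only [Polynomial.eval_add, Polynomial.eval_mul, Polynomial.eval_C, Polynomial.eval_X, φ]
    ring
  have hQdeg : Q.degree < n := by
    have hm' : (m : ℝ)⁻¹ ≠ 0 := by positivity
    rwa [Polynomial.degree_comp (by rw [Polynomial.degree_linear hm']; exact zero_lt_one),
      Polynomial.degree_linear hm', mul_one]
  have hPQ : P = Q := by
    refine Polynomial.eq_of_degrees_lt_of_eval_index_eq (range n)
      (v := fun i : ℕ => (((K + i) * m : ℕ) : ℝ)) ?_ (by simpa) (by simpa) fun i hi => ?_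
    · intro a _ b _ hab
      have := Nat.eq_of_mul_eq_mul_right hm (Nat.cast_injective hab)
      omega
    · have hnode' : φ ((K + i) * m) = i := by
        simp only [φ]
        push_cast
        field_simp
        ring
      rw [← hP, hQ, comp_apply, hnode']
      exact hnode i (mem_range.1 hi)
  push_cast
  rw [show (j / m - K : ℝ) = φ j from rfl, ← hQ, ← hPQ, ← hP]
  rfl

theorem eq_interpolate_of_fwdDiff_iter_eq_zero {g : ℝ → ℝ} (hg : Continuous g) {n : ℕ}
    (hΔ : ∀ x h, (fwdDiff h)^[n] g x = 0) (t : ℝ) :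
    g t = (Lagrange.interpolate (range n) (↑) fun i : ℕ => g i).eval t := by
  have hinj : Set.InjOn ((↑) : ℕ → ℝ) (range n) := Nat.cast_injective.injOn
  refine congrFun (Continuous.ext_on Rat.denseRange_cast hg (Polynomial.continuous _) ?_) t
  rintro _ ⟨r, rfl⟩
  refine apply_ratCast_eq_eval_of_fwdDiff_iter_eq_zero hΔ ?_ (fun i hi => ?_) r
  · simpa only [card_range] using Lagrange.degree_interpolate_lt (fun i : ℕ => g i) hinj
  · exact (Lagrange.eval_interpolate_at_node (fun i : ℕ => g i) hinj (mem_range.2 hi)).symm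

theorem exists_mvPolynomial_eq_of_fwdDiff_iter_eq_zero {n : ℕ} :
    ∀ {d : ℕ} {f : (Fin d → ℝ) → ℝ}, Continuous f →
      (∀ x h, (fwdDiff h)^[n] f x = 0) →
      ∃ p : MvPolynomial (Fin d) ℝ, ∀ x, f x = MvPolynomial.eval x p
  | 0, f, _, _ =>
    ⟨MvPolynomial.C (f 0), fun x => by rw [Subsingleton.elim x 0, MvPolynomial.eval_C]⟩
  | d + 1, f, hf, hΔ => by
    have hslice (c : ℝ) :
        ∃ P : MvPolynomial (Fin d) ℝ, ∀ y, f (Fin.cons c y) = P.eval y := by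
      refine exists_mvPolynomial_eq_of_fwdDiff_iter_eq_zero (n := n) (by fun_prop) fun y h => ?_
      have hφ : Semiconj (fun y => (Fin.cons c y : Fin (d + 1) → ℝ)) (· + h)
          (· + Fin.cons 0 h) :=
        fun y => by simp only [Fin.cons_add_cons, add_zero]
      rw [← comp_def, fwdDiff_iter_comp_of_semiconj hφ, hΔ]
    choose P hP using hslice
    have hline (y : Fin d → ℝ) (t : ℝ) : f (Fin.cons t y) = ∑ j ∈ range n,
        (P j).eval y * (Lagrange.basis (range n) ((↑) : ℕ → ℝ) j).eval t := by
      have hφ (s : ℝ) : Semiconj (fun t : ℝ => (Fin.cons t y : Fin (d + 1) → ℝ)) (· + s)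
          (· + Fin.cons s 0) := fun t => by simp only [Fin.cons_add_cons, add_zero]
      rw [eq_interpolate_of_fwdDiff_iter_eq_zero (g := fun t => f (Fin.cons t y)) (by fun_prop)
        (fun t s => by rw [← comp_def, fwdDiff_iter_comp_of_semiconj (hφ s), hΔ]) t,
        Lagrange.interpolate_apply, Polynomial.eval_finsetSum]
      simp [hP]
    refine ⟨∑ j ∈ range n,
      (Lagrange.basis (range n) ((↑) : ℕ → ℝ) j).toMvPolynomial 0 *
        MvPolynomial.rename Fin.succ (P j), fun x => ?_⟩
    rw [← Fin.cons_self_tail x, hline, map_sum]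
    refine sum_congr rfl fun j _ => ?_
    rw [map_mul, MvPolynomial.eval_toMvPolynomial, MvPolynomial.eval_rename, Fin.cons_zero,
      Fin.cons_comp_succ, mul_comm]

theorem frechet_continuous_solutions_general (d N : ℕ) (hN : 1 ≤ N)
    (f : (Fin d → ℝ) → ℝ) (hf : Continuous f) :
    (∀ x h : Fin d → ℝ,
        ∑ k ∈ Finset.range (N + 1),
          (N.choose k : ℝ) * (-1) ^ (N - k) * f (x + k • h) = 0) ↔
      ∃ p : MvPolynomial (Fin d) ℝ,
        p.totalDegree ≤ N - 1 ∧ ∀ x : Fin d → ℝ, f x = MvPolynomial.eval x p := by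
  simp_rw [← fwdDiff_iter_eq_sum_choose]
  constructor
  · intro hΔ
    obtain ⟨p, hp⟩ := exists_mvPolynomial_eq_of_fwdDiff_iter_eq_zero hf hΔ
    obtain rfl : f = (MvPolynomial.eval · p) := funext hp
    have hdeg := (MvPolynomial.fwdDiff_iter_eval_eq_zero_iff_totalDegree_lt hN).1 hΔ
    exact ⟨p, Nat.le_sub_one_of_lt hdeg, hp⟩
  · rintro ⟨p, hdeg, hp⟩
    obtain rfl : f = (MvPolynomial.eval · p) := funext hp
    exact (MvPolynomial.fwdDiff_iter_eval_eq_zero_iff_totalDegree_lt hN).2 (by omega)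

/-- **Fréchet's theorem for continuous functions on `ℝ^d`.** A continuous `f : ℝ^d → ℝ`
satisfies the fixed-step Fréchet functional equation
`∑_{k=0}^{N} binom(N,k) (-1)^{N-k} f(x + k h) = 0` for all `x, h ∈ ℝ^d` if and only if
`f` is a polynomial function of total degree at most `N - 1`. -/
theorem frechet_continuous_solutions (d N : ℕ) (hd : 1 ≤ d) (hN : 1 ≤ N)
    (f : (Fin d → ℝ) → ℝ) (hf : Continuous f) :
    (∀ x h : Fin d → ℝ,
        ∑ k ∈ Finset.range (N + 1),
          (N.choose k : ℝ) * (-1) ^ (N - k) * f (x + k • h) = 0) ↔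
      ∃ p : MvPolynomial (Fin d) ℝ,
        p.totalDegree ≤ N - 1 ∧ ∀ x : Fin d → ℝ, f x = MvPolynomial.eval x p :=
  frechet_continuous_solutions_general d N hN f hf
end

section
/- Let N ≥ 1, let X and Y be vector spaces over ℚ, and let f : X → Y. Then f satisfies the Fréchet equation with variable step, Δ_{h_1}Δ_{h_2}⋯Δ_{h_N} f(x) = 0 for all x, h_1, …, h_N ∈ X, if and only if f satisfies the Fréchet equation with fixed step, Δ_h^N f(x) = ∑_{k=0}^{N} binom(N,k)(−1)^{N−k} f(x+kh) = 0 for all x,h ∈ X. -/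
/-!
Let `K` be the annihilator of `f` in the group algebra `ℚ[X]` acting on functions by
translation, and let `e h` be the class of `h` in `ℚ[X] ⧸ K`. The fixed-step equation says
`(e h - 1) ^ N = 0` for every `h`, the variable-step one says `∏ i, (e (h i) - 1) = 0`, and the
latter implies the former by taking equal steps.

For `a : Fin N → A` in a commutative ring, expanding `(t - 1) ^ N` binomially and summing over
subsets gives
`∑ S, ± (∏ i ∈ S, a i - 1) ^ N = ∑ k, (-1) ^ (N - k) * N.choose k * ∏ i, (a i ^ k - 1)`,
and the right side is `∏ i, (a i - 1) * Q` with
`Q = ∑ k, (-1) ^ (N - k) * N.choose k * ∏ i, ∑ j < k, a i ^ j`.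
When every `a i - 1` is nilpotent, `Q ≡ ∑ k, (-1) ^ (N - k) * N.choose k * k ^ N = N!` modulo
the nilradical, so `Q` is a unit over `ℚ`. Taking `a i = e (h i)`, whose subset products are
`e (∑ i ∈ S, h i)`, gives the variable-step equation.
-/

/-- The forward difference operator `Δ_h f (x) = f (x + h) - f x`. -/
def fdiff1 {X Y : Type*} [Add X] [Sub Y] (h : X) (f : X → Y) : X → Y :=
  fun x => f (x + h) - f x

/-- The iterated difference operator `Δ_{h 0} Δ_{h 1} ⋯ Δ_{h (n-1)} f`. -/
def fdiffMulti {X Y : Type*} [Add X] [Sub Y] : (n : ℕ) → (Fin n → X) → (X → Y) → X → Y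
  | 0, _, f => f
  | n + 1, h, f => fdiff1 (h 0) (fdiffMulti n (fun i => h i.succ) f)

open Finset
open scoped Nat

section CommRing

variable {A : Type*} [CommRing A]

theorem sum_range_neg_one_pow_mul_choose_mul_pow_self (N : ℕ) :
    ∑ k ∈ range (N + 1), (-1 : A) ^ (N - k) * N.choose k * (k : A) ^ N = N ! := by
  have h := congrFun (fwdDiff_iter_eq_factorial (R := A) (n := N)) 0
  rw [fwdDiff_iter_eq_sum_shift] at h
  simpa [zsmul_eq_mul, mul_assoc] using h

theorem sum_neg_one_pow_card_compl_mul_prod_sub_one_pow {ι : Type*} [Fintype ι] [DecidableEq ι]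
    (a : ι → A) (N : ℕ) :
    ∑ S : Finset ι, (-1) ^ #Sᶜ * (∏ i ∈ S, a i - 1) ^ N =
      ∑ k ∈ range (N + 1), (-1) ^ (N - k) * N.choose k * ∏ i, (a i ^ k - 1) := by
  simp_rw [sub_eq_add_neg, Fintype.prod_add, add_pow, mul_sum, prod_pow]
  rw [sum_comm]
  refine sum_congr rfl fun k _ => sum_congr rfl fun S _ => ?_
  rw [prod_const]
  ring

variable [Algebra ℚ A]

theorem isUnit_sum_neg_one_pow_mul_choose_mul_prod_geom_sum {N : ℕ} (a : Fin N → A)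
    (ha : ∀ i, IsNilpotent (a i - 1)) :
    IsUnit (∑ k ∈ range (N + 1),
      (-1) ^ (N - k) * N.choose k * ∏ i, ∑ j ∈ range k, a i ^ j) := by
  set Q := ∑ k ∈ range (N + 1), (-1) ^ (N - k) * N.choose k * ∏ i, ∑ j ∈ range k, a i ^ j
  have mk_a (i : Fin N) : Ideal.Quotient.mk (nilradical A) (a i) = 1 := by
    rw [← sub_eq_zero, ← map_one (Ideal.Quotient.mk _), ← map_sub,
      Ideal.Quotient.eq_zero_iff_mem, mem_nilradical]
    exact ha i
  have hQ : IsNilpotent (Q - N !) := by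
    rw [← mem_nilradical, ← Ideal.Quotient.eq_zero_iff_mem, map_sub, sub_eq_zero]
    simp [Q, mk_a, ← sum_range_neg_one_pow_mul_choose_mul_pow_self N]
  have hfact : IsUnit (N ! : A) := by
    simpa using ((Nat.cast_ne_zero.2 N.factorial_ne_zero : (N ! : ℚ) ≠ 0).isUnit).map
      (algebraMap ℚ A)
  simpa using hQ.isUnit_add_left_of_commute hfact (Commute.all _ _)

theorem prod_sub_one_eq_zero_of_prod_sub_one_pow_eq_zero {N : ℕ} (a : Fin N → A)
    (ha : ∀ S : Finset (Fin N), (∏ i ∈ S, a i - 1) ^ N = 0) :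
    ∏ i, (a i - 1) = 0 := by
  have hnil (i : Fin N) : IsNilpotent (a i - 1) := ⟨N, by simpa using ha {i}⟩
  refine ((isUnit_sum_neg_one_pow_mul_choose_mul_prod_geom_sum a hnil).mul_left_eq_zero).1 ?_
  calc (∏ i, (a i - 1)) * ∑ k ∈ range (N + 1), (-1) ^ (N - k) * N.choose k *
        ∏ i, ∑ j ∈ range k, a i ^ j
      = ∑ k ∈ range (N + 1), (-1) ^ (N - k) * N.choose k * ∏ i, (a i ^ k - 1) := by
        simp_rw [← geom_sum_mul, prod_mul_distrib, mul_sum]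
        exact sum_congr rfl fun k _ => by ring
    _ = ∑ S : Finset (Fin N), (-1) ^ #Sᶜ * (∏ i ∈ S, a i - 1) ^ N :=
        (sum_neg_one_pow_card_compl_mul_prod_sub_one_pow a N).symm
    _ = 0 := sum_eq_zero fun S _ => by rw [ha, mul_zero]

end CommRing

noncomputable def shiftAlgHom (R X Y : Type*) [CommSemiring R] [AddCommMonoid X]
    [AddCommMonoid Y] [Module R Y] : AddMonoidAlgebra R X →ₐ[R] Module.End R (X → Y) :=
  AddMonoidAlgebra.lift R (Module.End R (X → Y)) X
    { toFun h := LinearMap.funLeft R Y (· + h.toAdd)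
      map_one' := by ext; simp [LinearMap.funLeft_apply]
      map_mul' g h := by
        ext f x
        simp only [LinearMap.funLeft_apply, toAdd_mul, Module.End.mul_apply]
        abel_nf }

section FiniteDifferences

variable {X Y : Type*} [AddCommMonoid X] [AddCommGroup Y]

theorem fdiffMulti_const (n : ℕ) (h : X) (f : X → Y) :
    fdiffMulti n (fun _ => h) f = (fwdDiff h)^[n] f := by
  induction n with
  | zero => rfl
  | succ n ih => rw [fdiffMulti, ih, Function.iterate_succ_apply']; rfl

variable {R : Type*} [CommRing R] [Module R Y]

theorem coe_shiftAlgHom_single_one_sub_one (h : X) :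
    ⇑(shiftAlgHom R X Y (AddMonoidAlgebra.single h 1 - 1)) = fwdDiff h := by
  ext f x
  simp [shiftAlgHom, fwdDiff, LinearMap.funLeft_apply, AddMonoidAlgebra.one_def]

theorem shiftAlgHom_single_one_sub_one_pow (h : X) (n : ℕ) (f : X → Y) :
    shiftAlgHom R X Y ((AddMonoidAlgebra.single h 1 - 1) ^ n) f = (fwdDiff h)^[n] f := by
  rw [map_pow, Module.End.pow_apply, coe_shiftAlgHom_single_one_sub_one]

theorem fdiffMulti_eq_shiftAlgHom_prod (n : ℕ) (h : Fin n → X) (f : X → Y) :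
    fdiffMulti n h f = shiftAlgHom R X Y (∏ i, (AddMonoidAlgebra.single (h i) 1 - 1)) f := by
  induction n generalizing f with
  | zero => simp [fdiffMulti]
  | succ n ih =>
    rw [fdiffMulti, ih, Fin.prod_univ_succ, map_mul, Module.End.mul_apply,
      coe_shiftAlgHom_single_one_sub_one]
    rfl

theorem fdiffMulti_eq_zero_of_forall_fwdDiff_iter_eq_zero [Module ℚ Y] {N : ℕ} {f : X → Y}
    (hf : ∀ g, (fwdDiff g)^[N] f = 0) (h : Fin N → X) : fdiffMulti N h f = 0 := by
  let K := (Ideal.torsionOf (Module.End ℚ (X → Y)) (X → Y) f).comap (shiftAlgHom ℚ X Y)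
  have mk_eq_zero (p : AddMonoidAlgebra ℚ X) :
      Ideal.Quotient.mk K p = 0 ↔ shiftAlgHom ℚ X Y p f = 0 := by
    rw [Ideal.Quotient.eq_zero_iff_mem, Ideal.mem_comap, Ideal.mem_torsionOf_iff,
      Module.End.smul_def]
  have hprod : ∏ i, (Ideal.Quotient.mk K (AddMonoidAlgebra.single (h i) 1) - 1) = 0 := by
    refine prod_sub_one_eq_zero_of_prod_sub_one_pow_eq_zero _ fun S => ?_
    rw [← map_prod, AddMonoidAlgebra.prod_single, prod_const_one,
      ← map_one (Ideal.Quotient.mk K), ← map_sub, ← map_pow, mk_eq_zero,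
      shiftAlgHom_single_one_sub_one_pow, hf]
  rw [fdiffMulti_eq_shiftAlgHom_prod (R := ℚ), ← mk_eq_zero, map_prod]
  simpa only [map_sub, map_one] using hprod

end FiniteDifferences

theorem frechet_variable_iff_fixed_step_general
    (N : ℕ)
    (X Y : Type*) [AddCommGroup X] [AddCommGroup Y] [Module ℚ Y]
    (f : X → Y) :
    (∀ (x : X) (h : Fin N → X), fdiffMulti N h f x = 0) ↔
      (∀ x h : X,
        ∑ k ∈ Finset.range (N + 1),
          ((-1 : ℤ) ^ (N - k) * (N.choose k : ℤ)) • f (x + k • h) = 0) := by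
  simp_rw [← fwdDiff_iter_eq_sum_shift]
  refine ⟨fun hvar x h => ?_, fun hfix x h => ?_⟩
  · rw [← fdiffMulti_const]
    exact hvar x _
  · have hfix' (g : X) : (fwdDiff g)^[N] f = 0 := funext (hfix · g)
    exact congrFun (fdiffMulti_eq_zero_of_forall_fwdDiff_iter_eq_zero hfix' h) x

/-- **Djoković's equivalence.** For `f : X → Y` between `ℚ`-vector spaces, the
variable-step Fréchet equation `Δ_{h₁} ⋯ Δ_{h_N} f = 0` holds for all steps if and only if
the fixed-step equation `Δ_h^N f (x) = ∑_{k=0}^N binom(N,k) (-1)^{N-k} f(x + k h) = 0`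
holds for all `x, h`. -/
theorem frechet_variable_iff_fixed_step
    (N : ℕ) (hN : 1 ≤ N)
    (X Y : Type*) [AddCommGroup X] [Module ℚ X] [AddCommGroup Y] [Module ℚ Y]
    (f : X → Y) :
    (∀ (x : X) (h : Fin N → X), fdiffMulti N h f x = 0) ↔
      (∀ x h : X,
        ∑ k ∈ Finset.range (N + 1),
          ((-1 : ℤ) ^ (N - k) * (N.choose k : ℤ)) • f (x + k • h) = 0) :=
  frechet_variable_iff_fixed_step_general N X Y f
end

section
/- Let N ≥ 1 and let η ∈ ℂ be a primitive 2N-th root of unity. Then neither the function f(z) = z^N nor the function g(z) = conj(z)^N satisfies the Haruki functional equation; that is, there exist x,y ∈ ℂ with ∑_{k=0}^{N-1} f(x + η^{2k}y) ≠ ∑_{k=0}^{N-1} f(x + η^{2k+1}y), and similarly for g. -/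
/-!
Since `η ^ N = -1`, the `N`-th power of `η ^ j` is `(-1) ^ j`; so at `x = 0`, `y = 1` the two sides
of the equation for `z ↦ z ^ N` are `N` and `-N`. For `z ↦ conj z ^ N` both sides are the complex
conjugates of those for `z ↦ z ^ N`, so they differ at the same point.
-/

open Finset

theorem IsPrimitiveRoot.pow_pow_half_eq_neg_one_pow {R : Type*} [CommRing R] [NoZeroDivisors R]
    {η : R} {N : ℕ} (hN : 0 < N) (hη : IsPrimitiveRoot η (2 * N)) (j : ℕ) :
    (η ^ j) ^ N = (-1) ^ j := by
  have hηN : IsPrimitiveRoot (η ^ N) 2 := hη.pow (by positivity) (mul_comm 2 N)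
  rw [← pow_mul, mul_comm, pow_mul, hηN.eq_neg_one_of_two_right]

theorem IsPrimitiveRoot.sum_pow_even_ne_sum_pow_odd {K : Type*} [Field K] [CharZero K]
    {η : K} {N : ℕ} (hN : 0 < N) (hη : IsPrimitiveRoot η (2 * N)) :
    ∑ k ∈ range N, (η ^ (2 * k)) ^ N ≠ ∑ k ∈ range N, (η ^ (2 * k + 1)) ^ N := by
  simp only [hη.pow_pow_half_eq_neg_one_pow hN, (even_two_mul _).neg_one_pow,
    (odd_two_mul_add_one _).neg_one_pow, sum_const, card_range, nsmul_eq_mul, mul_neg, mul_one]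
  intro h
  have : (N : K) = 0 := by linear_combination h / 2
  exact hN.ne' (Nat.cast_eq_zero.mp this)

/-- Neither `z ↦ z^N` nor `z ↦ conj(z)^N` satisfies the Haruki functional equation
associated with a primitive `2N`-th root of unity `η`. -/
theorem zpowN_not_haruki (N : ℕ) (hN : 1 ≤ N) (η : ℂ) (hη : IsPrimitiveRoot η (2 * N)) :
    (∃ x y : ℂ,
      ∑ k ∈ Finset.range N, (x + η ^ (2 * k) * y) ^ N ≠
        ∑ k ∈ Finset.range N, (x + η ^ (2 * k + 1) * y) ^ N) ∧
    (∃ x y : ℂ,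
      ∑ k ∈ Finset.range N, (starRingEnd ℂ) (x + η ^ (2 * k) * y) ^ N ≠
        ∑ k ∈ Finset.range N, (starRingEnd ℂ) (x + η ^ (2 * k + 1) * y) ^ N) := by
  have hf : ∃ x y : ℂ,
      ∑ k ∈ Finset.range N, (x + η ^ (2 * k) * y) ^ N ≠
        ∑ k ∈ Finset.range N, (x + η ^ (2 * k + 1) * y) ^ N :=
    ⟨0, 1, by simpa only [zero_add, mul_one] using hη.sum_pow_even_ne_sum_pow_odd hN⟩
  refine ⟨hf, ?_⟩
  obtain ⟨x, y, hxy⟩ := hf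
  refine ⟨x, y, ?_⟩
  simp only [← map_pow, ← map_sum]
  exact (starRingEnd ℂ).injective.ne hxy
end

section
/- Let N ≥ 1 and let η ∈ ℂ be a primitive 2N-th root of unity. The function g_N(z) = z^{N-1}·conj(z)^{N-1} = |z|^{2(N-1)} satisfies the Haruki functional equation: ∑_{k=0}^{N-1} g_N(x + η^{2k}y) = ∑_{k=0}^{N-1} g_N(x + η^{2k+1}y) for all x,y ∈ ℂ. -/
/-!
On the unit circle `conj ζ = ζ⁻¹`, so `|x + ζ y|^(2(N-1))` is a Laurent polynomial in `ζ` whose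
exponents lie strictly between `-N` and `N`. Summing `ζ^e` over the `N`-th roots of unity
`ω^k = η^(2k)`, or over their coset `η ω^k`, kills every exponent `e ≠ 0`, so both sides of the
Haruki equation equal `N` times the constant term.
-/

open Finset

namespace IsPrimitiveRoot

variable {K : Type*} [Field K] {ω : K} {N : ℕ}

theorem sum_pow_zpow_eq_zero (hω : IsPrimitiveRoot ω N) {e : ℤ} (he : ¬(N : ℤ) ∣ e) :
    ∑ k ∈ range N, (ω ^ k) ^ e = 0 := by
  have hne : ω ^ e ≠ 1 := fun h => he ((hω.zpow_eq_one_iff_dvd e).mp h)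
  have hN : (ω ^ e) ^ N = 1 := by
    rw [← zpow_natCast, ← zpow_mul, mul_comm, zpow_mul, hω.zpow_eq_one, one_zpow]
  have hswap : ∀ k : ℕ, (ω ^ k) ^ e = (ω ^ e) ^ k := fun k => by
    rw [← zpow_natCast, ← zpow_natCast, ← zpow_mul, ← zpow_mul, mul_comm]
  simp only [hswap]
  rw [geom_sum_eq hne, hN, sub_self, zero_div]

theorem sum_mul_pow_zpow_eq_sum_pow_zpow (hω : IsPrimitiveRoot ω N) (c : K) {e : ℤ}
    (he : |e| < N) :
    ∑ k ∈ range N, (c * ω ^ k) ^ e = ∑ k ∈ range N, (ω ^ k) ^ e := by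
  simp only [mul_zpow, ← mul_sum]
  rcases eq_or_ne e 0 with rfl | he0
  · simp
  · have hdvd : ¬(N : ℤ) ∣ e := fun h => he0 (Int.eq_zero_of_abs_lt_dvd h he)
    rw [hω.sum_pow_zpow_eq_zero hdvd, mul_zero]

theorem sum_sum_mul_mul_pow_zpow_eq (hω : IsPrimitiveRoot ω N) {ι : Type*} (s : Finset ι)
    (a : ι → K) (e : ι → ℤ) (he : ∀ i ∈ s, |e i| < N) (c : K) :
    ∑ k ∈ range N, ∑ i ∈ s, a i * (c * ω ^ k) ^ e i =
      ∑ k ∈ range N, ∑ i ∈ s, a i * (ω ^ k) ^ e i := by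
  rw [sum_comm, sum_comm (s := range N)]
  refine sum_congr rfl fun i hi => ?_
  rw [← mul_sum, ← mul_sum, hω.sum_mul_pow_zpow_eq_sum_pow_zpow c (he i hi)]

end IsPrimitiveRoot

theorem add_mul_pow_mul_add_inv_mul_pow {K : Type*} [Field K] (x y u v : K) {ζ : K}
    (hζ : ζ ≠ 0) (n : ℕ) :
    (x + ζ * y) ^ n * (u + ζ⁻¹ * v) ^ n =
      ∑ p ∈ range (n + 1) ×ˢ range (n + 1),
        x ^ (n - p.1) * y ^ p.1 * n.choose p.1 * (u ^ (n - p.2) * v ^ p.2 * n.choose p.2) *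
          ζ ^ ((p.1 : ℤ) - p.2) := by
  rw [add_comm x, add_comm u, add_pow, add_pow, sum_mul_sum, sum_product]
  refine sum_congr rfl fun i _ => sum_congr rfl fun j _ => ?_
  rw [zpow_sub₀ hζ, zpow_natCast, zpow_natCast, mul_pow, mul_pow, inv_pow]
  field_simp

theorem Complex.add_mul_pow_mul_conj_pow (x y : ℂ) {ζ : ℂ} (hζ : ‖ζ‖ = 1) (n : ℕ) :
    (x + ζ * y) ^ n * (starRingEnd ℂ) (x + ζ * y) ^ n =
      ∑ p ∈ range (n + 1) ×ˢ range (n + 1),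
        x ^ (n - p.1) * y ^ p.1 * n.choose p.1 *
            ((starRingEnd ℂ) x ^ (n - p.2) * (starRingEnd ℂ) y ^ p.2 * n.choose p.2) *
          ζ ^ ((p.1 : ℤ) - p.2) := by
  have hζ0 : ζ ≠ 0 := norm_ne_zero_iff.mp (by rw [hζ]; exact one_ne_zero)
  rw [map_add, map_mul, ← Complex.inv_eq_conj hζ, add_mul_pow_mul_add_inv_mul_pow _ _ _ _ hζ0]

/-- The function `g_N(z) = z^{N-1} conj(z)^{N-1} = |z|^{2(N-1)}` satisfies the Haruki
functional equation associated with a primitive `2N`-th root of unity `η`. -/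
theorem absPow_satisfies_haruki (N : ℕ) (hN : 1 ≤ N) (η : ℂ)
    (hη : IsPrimitiveRoot η (2 * N)) :
    ∀ x y : ℂ,
      ∑ k ∈ Finset.range N,
          (x + η ^ (2 * k) * y) ^ (N - 1) * (starRingEnd ℂ) (x + η ^ (2 * k) * y) ^ (N - 1) =
        ∑ k ∈ Finset.range N,
          (x + η ^ (2 * k + 1) * y) ^ (N - 1) *
            (starRingEnd ℂ) (x + η ^ (2 * k + 1) * y) ^ (N - 1) := by
  intro x y
  have hω : IsPrimitiveRoot (η ^ 2) N := by
    simpa using hη.pow_of_dvd two_ne_zero (dvd_mul_right 2 N)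
  have hη1 : ‖η‖ = 1 := hη.norm'_eq_one (by omega)
  have hodd : ∀ k : ℕ, η ^ (2 * k + 1) = η * (η ^ 2) ^ k := fun k => by rw [pow_succ', pow_mul]
  have habs : ∀ p ∈ range (N - 1 + 1) ×ˢ range (N - 1 + 1), |(p.1 : ℤ) - p.2| < N := by
    intro p hp
    simp only [mem_product, mem_range] at hp
    rw [abs_lt]
    omega
  simp only [hodd, pow_mul, Complex.add_mul_pow_mul_conj_pow, norm_mul, norm_pow, hη1, one_pow,
    mul_one]
  exact (hω.sum_sum_mul_mul_pow_zpow_eq _ _ _ habs η).symm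
end
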